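/- Let x > 0 and α > -1, and for each integer k ≥ 0 set I_k(β) = ∫₀^∞ x^(t+α) t^β (log t)^k / Γ(t+α+1) dt, and for odd n ≥ 1 put Δ_n(β) = I_{n-1}(β) I_{n+1}(β) − I_n(β)². Then the Schur-type inequality (β₁−β₂)(β₁−β₃)Δ_n(β₁) + (β₂−β₁)(β₂−β₃)Δ_n(β₂) + (β₃−β₁)(β₃−β₂)Δ_n(β₃) ≥ 0 holds for all β₁, β₂, β₃ > -1. -/

import Mathlib

/-!
Put `f_β(t) = x^(t+α) t^β (log t)^(n-1) / Γ(t+α+1)` on `(0, ∞)`. Lagrange's identity gives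
`Δ_n(β) = ½ ∬ f_β(s) f_β(t) (log s - log t)² ds dt`, and as `n - 1` is even the integrand is
`A(s, t) (st)^β` with `A ≥ 0` independent of `β`. The Schur sum of `Δ_n` is therefore the integral
of `A(s, t)` times the Schur sum of `β ↦ u^β`, `u = st`, which is nonnegative because this function
is nonnegative and monotone (increasing for `u ≥ 1`, decreasing for `u ≤ 1`). All integrals converge
because `x^(t+α) / Γ(t+α+1) = O(e^(-t))`.
-/

open MeasureTheory Real Set

/-- `I_k(β) = ∫₀^∞ x^(t+α) t^β (log t)^k / Γ(t+α+1) dt`, the `k`-th derivative with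
respect to `β` of `Γ(β+1) μ(x, β, α)`. -/
noncomputable def volterraI (x α : ℝ) (k : ℕ) (β : ℝ) : ℝ :=
  ∫ t in Set.Ioi (0 : ℝ),
    x ^ (t + α) * t ^ β * (Real.log t) ^ k / Real.Gamma (t + α + 1)

def schurSum (f : ℝ → ℝ) (a b c : ℝ) : ℝ :=
  (a - b) * (a - c) * f a + (b - a) * (b - c) * f b + (c - a) * (c - b) * f c

section Schur

variable {f : ℝ → ℝ}

theorem schurSum_const_mul (A a b c : ℝ) :
    schurSum (fun y => A * f y) a b c = A * schurSum f a b c := by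
  unfold schurSum; ring

theorem schurSum_comp_neg (a b c : ℝ) :
    schurSum f a b c = schurSum (fun y => f (-y)) (-a) (-b) (-c) := by
  unfold schurSum; simp only [neg_neg]; ring

theorem schurSum_nonneg_of_le {a b c : ℝ} (hc : 0 ≤ f c) (hb : 0 ≤ f b) (hfba : f b ≤ f a)
    (hcb : c ≤ b) (hba : b ≤ a) : 0 ≤ schurSum f a b c := by
  have hdom : (b - c) * f b ≤ (a - c) * f a := mul_le_mul (by linarith) hfba hb (by linarith)
  have hsplit : schurSum f a b c =
      (a - b) * ((a - c) * f a - (b - c) * f b) + (a - c) * (b - c) * f c := by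
    unfold schurSum; ring
  rw [hsplit]
  exact add_nonneg (mul_nonneg (sub_nonneg.2 hba) (sub_nonneg.2 hdom))
    (mul_nonneg (mul_nonneg (by linarith) (by linarith)) hc)

theorem schurSum_nonneg_of_monotone (hf : Monotone f) (h0 : ∀ y, 0 ≤ f y) (a b c : ℝ) :
    0 ≤ schurSum f a b c := by
  have sorted : ∀ {a b c}, c ≤ b → b ≤ a → 0 ≤ schurSum f a b c := fun hcb hba =>
    schurSum_nonneg_of_le (h0 _) (h0 _) (hf hba) hcb hba
  unfold schurSum at sorted ⊢
  rcases le_total c b with hcb | hbc <;> rcases le_total b a with hba | hab <;>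
    rcases le_total c a with hca | hac
  · linear_combination sorted hcb hba
  · linear_combination sorted hcb hba
  · linear_combination sorted hca hab
  · linear_combination sorted hac hcb
  · linear_combination sorted hbc hca
  · linear_combination sorted hba hac
  · linear_combination sorted hab hbc
  · linear_combination sorted hab hbc

theorem schurSum_nonneg_of_antitone (hf : Antitone f) (h0 : ∀ y, 0 ≤ f y) (a b c : ℝ) :
    0 ≤ schurSum f a b c := by
  rw [schurSum_comp_neg]
  exact schurSum_nonneg_of_monotone (fun _ _ h => hf (neg_le_neg h)) (fun _ => h0 _) _ _ _

theorem schurSum_rpow_nonneg {u : ℝ} (hu : 0 < u) (a b c : ℝ) :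
    0 ≤ schurSum (u ^ ·) a b c := by
  rcases le_total 1 u with h | h
  · exact schurSum_nonneg_of_monotone (monotone_rpow_of_base_ge_one h)
      (fun _ => rpow_nonneg hu.le _) a b c
  · exact schurSum_nonneg_of_antitone (antitone_rpow_of_base_le_one hu h)
      (fun _ => rpow_nonneg hu.le _) a b c

end Schur

theorem exp_neg_mul_rpow_le_Gamma {M s : ℝ} (hM : 0 ≤ M) (hs : 1 ≤ s) :
    exp (-(M + 1)) * M ^ (s - 1) ≤ Gamma s := by
  have hs0 : 0 < s := by linarith
  have hsub : Ioc M (M + 1) ⊆ Ioi 0 := fun u hu => hM.trans_lt hu.1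
  have hInt := GammaIntegral_convergent hs0
  rw [Gamma_eq_integral hs0]
  calc exp (-(M + 1)) * M ^ (s - 1)
      = exp (-(M + 1)) * M ^ (s - 1) * volume.real (Ioc M (M + 1)) := by simp
    _ ≤ ∫ u in Ioc M (M + 1), exp (-u) * u ^ (s - 1) :=
        setIntegral_ge_of_const_le_real measurableSet_Ioc (by simp)
          (fun u hu => mul_le_mul (exp_le_exp.2 (by linarith [hu.2]))
            (rpow_le_rpow hM hu.1.le (by linarith)) (rpow_nonneg hM _) (exp_pos _).le)
          (hInt.mono_set hsub)
    _ ≤ ∫ u in Ioi 0, exp (-u) * u ^ (s - 1) :=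
        setIntegral_mono_set hInt
          (ae_restrict_of_forall_mem measurableSet_Ioi fun u (hu : 0 < u) =>
            mul_nonneg (exp_pos _).le (rpow_nonneg hu.le _))
          hsub.eventuallyLE

noncomputable def volterraWeight (x α t : ℝ) : ℝ :=
  x ^ (t + α) / Gamma (t + α + 1)

section Weight

variable {x α t : ℝ}

theorem volterraWeight_nonneg (hx : 0 ≤ x) (ht : 0 ≤ t + α + 1) : 0 ≤ volterraWeight x α t :=
  div_nonneg (rpow_nonneg hx _) (Gamma_nonneg_of_nonneg ht)

theorem continuousOn_volterraWeight (hx : 0 < x) :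
    ContinuousOn (volterraWeight x α) (Ioi (-α - 1)) := by
  have hΓ : ContinuousOn (fun t => Gamma (t + α + 1)) (Ioi (-α - 1)) :=
    differentiableOn_Gamma_Ioi.continuousOn.comp (by fun_prop)
      fun t (ht : -α - 1 < t) => show 0 < t + α + 1 by linarith
  exact (continuous_const.rpow (by fun_prop) fun _ => Or.inl hx.ne').continuousOn.div hΓ
    fun t (ht : -α - 1 < t) => (Gamma_pos_of_pos (by linarith)).ne'

/-- Bounding `Γ(t + α + 1)` below by its integrand on `[M, M + 1]` with `M = e x` turns
`x ^ (t + α)` into `e ^ (-(t + α))`. -/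
theorem volterraWeight_le_exp_neg (hx : 0 < x) (ht : 0 ≤ t + α) :
    volterraWeight x α t ≤ exp (exp 1 * x + 1 - α) * exp (-t) := by
  have hΓ := exp_neg_mul_rpow_le_Gamma (M := exp 1 * x) (s := t + α + 1) (by positivity)
    (by linarith)
  rw [add_sub_cancel_right] at hΓ
  have hexp : exp (exp 1 * x + 1 - α) * exp (-t) * exp (-(exp 1 * x + 1)) * exp (t + α) = 1 := by
    rw [← exp_add, ← exp_add, ← exp_add]
    convert exp_zero using 2
    ring
  have hx' : x ^ (t + α) = exp (exp 1 * x + 1 - α) * exp (-t) *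
      (exp (-(exp 1 * x + 1)) * (exp 1 * x) ^ (t + α)) := by
    rw [mul_rpow (exp_pos 1).le hx.le, exp_one_rpow]
    linear_combination (-x ^ (t + α)) * hexp
  rw [volterraWeight, div_le_iff₀ (by positivity), hx']
  exact mul_le_mul_of_nonneg_left hΓ (by positivity)

theorem exists_norm_volterraWeight_le (hx : 0 < x) (hα : -1 < α) :
    ∃ C, ∀ t, 0 ≤ t → ‖volterraWeight x α t‖ ≤ C * exp (-t) := by
  obtain ⟨C₀, hC₀⟩ := isCompact_Icc.exists_bound_of_continuousOn
    ((continuousOn_volterraWeight (α := α) hx).mono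
      fun t (ht : t ∈ Icc (0 : ℝ) 1) => show -α - 1 < t by linarith [ht.1])
  have hC₀0 : 0 ≤ C₀ := (norm_nonneg _).trans (hC₀ 0 ⟨le_rfl, zero_le_one⟩)
  refine ⟨max (C₀ * exp 1) (exp (exp 1 * x + 1 - α)), fun t ht => ?_⟩
  rcases le_total t 1 with ht1 | ht1
  · calc ‖volterraWeight x α t‖ ≤ C₀ := hC₀ t ⟨ht, ht1⟩
      _ ≤ C₀ * exp 1 * exp (-t) := by
          rw [mul_assoc, ← exp_add]
          exact le_mul_of_one_le_right hC₀0 (one_le_exp (by linarith))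
      _ ≤ _ := mul_le_mul_of_nonneg_right (le_max_left _ _) (exp_pos _).le
  · rw [norm_of_nonneg (volterraWeight_nonneg hx.le (by linarith))]
    exact (volterraWeight_le_exp_neg hx (by linarith)).trans
      (mul_le_mul_of_nonneg_right (le_max_right _ _) (exp_pos _).le)

end Weight

theorem integrableOn_Ioc_rpow_mul_log_pow {β : ℝ} (hβ : -1 < β) (k : ℕ) :
    IntegrableOn (fun t => t ^ β * log t ^ k) (Ioc 0 1) := by
  set ε := (β + 1) / (2 * (k + 1)) with hε
  have hε0 : 0 < ε := div_pos (by linarith) (by positivity)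
  have hkε : k * ε < β + 1 := by
    have : (k + 1 : ℝ) * ε = (β + 1) / 2 := by rw [hε]; field_simp
    nlinarith
  refine Integrable.mono' (g := fun t => (1 / ε) ^ k * t ^ (β - k * ε)) ?_ ?_ ?_
  · exact ((intervalIntegrable_iff_integrableOn_Ioc_of_le zero_le_one).mp
      (intervalIntegral.intervalIntegrable_rpow' (by linarith))).const_mul _
  · exact (by fun_prop : Measurable fun t : ℝ => t ^ β * log t ^ k).aestronglyMeasurable
  · filter_upwards [ae_restrict_mem measurableSet_Ioc] with t ⟨ht0, ht1⟩
    have hsplit : ‖t ^ β * log t ^ k‖ = |log t * t ^ ε| ^ k * t ^ (β - k * ε) := by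
      rw [norm_mul, norm_pow, norm_of_nonneg (rpow_nonneg ht0.le _), Real.norm_eq_abs, abs_mul,
        abs_of_nonneg (rpow_nonneg ht0.le _), mul_pow, ← rpow_natCast (t ^ ε), ← rpow_mul ht0.le,
        mul_comm, mul_assoc, ← rpow_add ht0]
      ring_nf
    rw [hsplit]
    gcongr
    exact (abs_log_mul_self_rpow_lt t ε ht0 ht1 hε0).le

theorem integrableOn_Ioi_one_exp_neg_mul_rpow_mul_log_pow {β : ℝ} (hβ : -1 < β) (k : ℕ) :
    IntegrableOn (fun t => exp (-t) * (t ^ β * log t ^ k)) (Ioi 1) := by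
  have hΓ : IntegrableOn (fun t => exp (-t) * t ^ (β + k)) (Ioi 1) := by
    have hs : 0 < β + k + 1 := by linarith [k.cast_nonneg (α := ℝ)]
    simpa using (GammaIntegral_convergent hs).mono_set (Ioi_subset_Ioi zero_le_one)
  refine hΓ.mono' (by fun_prop : Measurable _).aestronglyMeasurable ?_
  filter_upwards [ae_restrict_mem measurableSet_Ioi] with t (ht : 1 < t)
  have ht0 : 0 < t := zero_lt_one.trans ht
  have hlog : 0 ≤ log t := log_nonneg ht.le
  rw [norm_mul, norm_mul, norm_pow, norm_of_nonneg (exp_pos _).le,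
    norm_of_nonneg (rpow_nonneg ht0.le _), norm_of_nonneg hlog, rpow_add_natCast ht0.ne']
  gcongr
  exact log_le_self ht0.le

theorem integrableOn_exp_neg_mul_rpow_mul_log_pow {β : ℝ} (hβ : -1 < β) (k : ℕ) :
    IntegrableOn (fun t => exp (-t) * (t ^ β * log t ^ k)) (Ioi 0) := by
  rw [← Ioc_union_Ioi_eq_Ioi zero_le_one, integrableOn_union]
  refine ⟨?_, integrableOn_Ioi_one_exp_neg_mul_rpow_mul_log_pow hβ k⟩
  refine (integrableOn_Ioc_rpow_mul_log_pow hβ k).norm.mono'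
    (by fun_prop : Measurable _).aestronglyMeasurable ?_
  filter_upwards [ae_restrict_mem measurableSet_Ioc] with t ⟨ht0, _⟩
  rw [norm_mul, norm_of_nonneg (exp_pos _).le]
  exact mul_le_of_le_one_left (norm_nonneg _) (exp_le_one_iff.2 (neg_nonpos.2 ht0.le))

theorem prod_mul_sub_sq_eq {X : Type*} (f ℓ : X → ℝ) :
    (fun p : X × X => f p.1 * f p.2 * (ℓ p.1 - ℓ p.2) ^ 2 / 2) = fun p =>
      (f p.1 * (f p.2 * ℓ p.2 ^ 2) + f p.1 * ℓ p.1 ^ 2 * f p.2) / 2 -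
        f p.1 * ℓ p.1 * (f p.2 * ℓ p.2) := by
  funext p; ring

section Variance

variable {X : Type*} [MeasurableSpace X] {μ : Measure X} {f ℓ : X → ℝ}

theorem integrable_prod_mul_sub_sq [SFinite μ] (h0 : Integrable f μ)
    (h1 : Integrable (fun s => f s * ℓ s) μ) (h2 : Integrable (fun s => f s * ℓ s ^ 2) μ) :
    Integrable (fun p : X × X => f p.1 * f p.2 * (ℓ p.1 - ℓ p.2) ^ 2 / 2) (μ.prod μ) := by
  rw [prod_mul_sub_sq_eq]
  exact (((h0.mul_prod h2).add (h2.mul_prod h0)).div_const 2).sub (h1.mul_prod h1)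

theorem integral_prod_mul_sub_sq [SigmaFinite μ] (h0 : Integrable f μ)
    (h1 : Integrable (fun s => f s * ℓ s) μ) (h2 : Integrable (fun s => f s * ℓ s ^ 2) μ) :
    ∫ p : X × X, f p.1 * f p.2 * (ℓ p.1 - ℓ p.2) ^ 2 / 2 ∂(μ.prod μ) =
      (∫ s, f s ∂μ) * (∫ s, f s * ℓ s ^ 2 ∂μ) - (∫ s, f s * ℓ s ∂μ) ^ 2 := by
  rw [prod_mul_sub_sq_eq,
    integral_sub (by exact ((h0.mul_prod h2).add (h2.mul_prod h0)).div_const 2)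
      (by exact h1.mul_prod h1),
    integral_div, integral_add (by exact h0.mul_prod h2) (by exact h2.mul_prod h0),
    integral_prod_mul f (fun s => f s * ℓ s ^ 2), integral_prod_mul (fun s => f s * ℓ s ^ 2) f,
    integral_prod_mul (fun s => f s * ℓ s) (fun s => f s * ℓ s)]
  ring

end Variance

theorem integral_schurSum {X : Type*} [MeasurableSpace X] {μ : Measure X} {K : ℝ → X → ℝ}
    {a b c : ℝ} (ha : Integrable (K a) μ) (hb : Integrable (K b) μ) (hc : Integrable (K c) μ) :
    ∫ p, schurSum (K · p) a b c ∂μ = schurSum (fun β => ∫ p, K β p ∂μ) a b c := by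
  simp only [schurSum]
  rw [integral_add (by exact (ha.const_mul _).add (hb.const_mul _)) (hc.const_mul _),
    integral_add (ha.const_mul _) (hb.const_mul _), integral_const_mul, integral_const_mul,
    integral_const_mul]

theorem ae_mem_Ioi_prod_Ioi :
    ∀ᵐ p ∂(volume.restrict (Ioi (0 : ℝ))).prod (volume.restrict (Ioi (0 : ℝ))),
      p ∈ Ioi 0 ×ˢ Ioi 0 := by
  rw [Measure.prod_restrict]
  exact ae_restrict_mem (measurableSet_Ioi.prod measurableSet_Ioi)

/-- The integrand of Lagrange's identity for `I_k I_{k+2} - I_{k+1}²`, written so that `β` enters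
only through `(st)^β`. -/
noncomputable def volterraKernel (x α : ℝ) (k : ℕ) (β : ℝ) (p : ℝ × ℝ) : ℝ :=
  volterraWeight x α p.1 * volterraWeight x α p.2 * (log p.1 * log p.2) ^ k *
    (log p.1 - log p.2) ^ 2 / 2 * (p.1 * p.2) ^ β

section Volterra

variable {x α β : ℝ}

theorem volterraI_eq_integral_weight (x α : ℝ) (k : ℕ) (β : ℝ) :
    volterraI x α k β = ∫ t in Ioi 0, volterraWeight x α t * (t ^ β * log t ^ k) := by
  unfold volterraI volterraWeight
  congr 1
  funext t
  ring

theorem integrableOn_volterraWeight_mul (hx : 0 < x) (hα : -1 < α) (hβ : -1 < β) (k : ℕ) :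
    IntegrableOn (fun t => volterraWeight x α t * (t ^ β * log t ^ k)) (Ioi 0) := by
  obtain ⟨C, hC⟩ := exists_norm_volterraWeight_le hx hα
  have hw : ContinuousOn (volterraWeight x α) (Ioi 0) :=
    (continuousOn_volterraWeight hx).mono fun t (ht : 0 < t) => show -α - 1 < t by linarith
  refine ((integrableOn_exp_neg_mul_rpow_mul_log_pow hβ k).norm.const_mul C).mono'
    ((hw.aestronglyMeasurable measurableSet_Ioi).mul
      (by fun_prop : Measurable fun t : ℝ => t ^ β * log t ^ k).aestronglyMeasurable) ?_
  filter_upwards [ae_restrict_mem measurableSet_Ioi] with t (ht : 0 < t)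
  rw [norm_mul, norm_mul (exp _), norm_of_nonneg (exp_pos _).le, ← mul_assoc]
  exact mul_le_mul_of_nonneg_right (hC t ht.le) (norm_nonneg _)

theorem volterraKernel_ae_eq (x α : ℝ) (k : ℕ) (β : ℝ) :
    (fun p : ℝ × ℝ => volterraWeight x α p.1 * (p.1 ^ β * log p.1 ^ k) *
        (volterraWeight x α p.2 * (p.2 ^ β * log p.2 ^ k)) * (log p.1 - log p.2) ^ 2 / 2)
      =ᵐ[(volume.restrict (Ioi (0 : ℝ))).prod (volume.restrict (Ioi (0 : ℝ)))]
        volterraKernel x α k β := by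
  filter_upwards [ae_mem_Ioi_prod_Ioi] with p ⟨hp₁, hp₂⟩
  rw [volterraKernel, mul_rpow (le_of_lt hp₁) (le_of_lt hp₂)]
  ring

theorem integrable_volterraKernel (hx : 0 < x) (hα : -1 < α) (hβ : -1 < β) (k : ℕ) :
    Integrable (volterraKernel x α k β)
      ((volume.restrict (Ioi (0 : ℝ))).prod (volume.restrict (Ioi (0 : ℝ)))) := by
  refine (integrable_prod_mul_sub_sq (ℓ := log) (integrableOn_volterraWeight_mul hx hα hβ k)
    ?_ ?_).congr (volterraKernel_ae_eq x α k β)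
  · simpa only [IntegrableOn, pow_add, pow_one, mul_assoc] using
      integrableOn_volterraWeight_mul hx hα hβ (k + 1)
  · simpa only [IntegrableOn, pow_add, pow_one, mul_assoc] using
      integrableOn_volterraWeight_mul hx hα hβ (k + 2)

theorem volterraI_mul_sub_sq_eq_integral (hx : 0 < x) (hα : -1 < α) (hβ : -1 < β) (k : ℕ) :
    volterraI x α k β * volterraI x α (k + 2) β - volterraI x α (k + 1) β ^ 2 =
      ∫ p, volterraKernel x α k β p
        ∂(volume.restrict (Ioi (0 : ℝ))).prod (volume.restrict (Ioi (0 : ℝ))) := by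
  rw [← integral_congr_ae (volterraKernel_ae_eq x α k β),
    integral_prod_mul_sub_sq (ℓ := log) (integrableOn_volterraWeight_mul hx hα hβ k)
      (by simpa only [IntegrableOn, pow_add, pow_one, mul_assoc] using
        integrableOn_volterraWeight_mul hx hα hβ (k + 1))
      (by simpa only [IntegrableOn, pow_add, pow_one, mul_assoc] using
        integrableOn_volterraWeight_mul hx hα hβ (k + 2))]
  simp only [volterraI_eq_integral_weight, pow_add, pow_one, mul_assoc]

theorem schurSum_volterraKernel_nonneg (hx : 0 ≤ x) (hα : -1 < α) {k : ℕ} (hk : Even k)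
    {p : ℝ × ℝ} (hp : p ∈ Ioi 0 ×ˢ Ioi 0) (a b c : ℝ) :
    0 ≤ schurSum (volterraKernel x α k · p) a b c := by
  obtain ⟨hp₁, hp₂⟩ := hp
  simp only [volterraKernel]
  rw [schurSum_const_mul]
  refine mul_nonneg ?_ (schurSum_rpow_nonneg (mul_pos hp₁ hp₂) a b c)
  have hw₁ := volterraWeight_nonneg (t := p.1) (α := α) hx (by linarith [mem_Ioi.1 hp₁])
  have hw₂ := volterraWeight_nonneg (t := p.2) (α := α) hx (by linarith [mem_Ioi.1 hp₂])
  have hlog := hk.pow_nonneg (log p.1 * log p.2)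
  positivity

end Volterra

theorem volterraI_delta_schur_general (x α : ℝ) (hx : 0 < x) (hα : -1 < α)
    (n : ℕ) (hn : Odd n)
    (β₁ β₂ β₃ : ℝ) (hβ₁ : -1 < β₁) (hβ₂ : -1 < β₂) (hβ₃ : -1 < β₃) :
    0 ≤ (β₁ - β₂) * (β₁ - β₃) *
          (volterraI x α (n - 1) β₁ * volterraI x α (n + 1) β₁ -
            volterraI x α n β₁ ^ 2) +
        (β₂ - β₁) * (β₂ - β₃) *
          (volterraI x α (n - 1) β₂ * volterraI x α (n + 1) β₂ -
            volterraI x α n β₂ ^ 2) +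
        (β₃ - β₁) * (β₃ - β₂) *
          (volterraI x α (n - 1) β₃ * volterraI x α (n + 1) β₃ -
            volterraI x α n β₃ ^ 2) := by
  obtain ⟨m, rfl⟩ := hn
  rw [Nat.add_sub_cancel, show 2 * m + 1 + 1 = 2 * m + 2 from rfl,
    volterraI_mul_sub_sq_eq_integral hx hα hβ₁, volterraI_mul_sub_sq_eq_integral hx hα hβ₂,
    volterraI_mul_sub_sq_eq_integral hx hα hβ₃]
  calc 0 ≤ ∫ p, schurSum (volterraKernel x α (2 * m) · p) β₁ β₂ β₃
          ∂(volume.restrict (Ioi (0 : ℝ))).prod (volume.restrict (Ioi (0 : ℝ))) :=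
        integral_nonneg_of_ae <| ae_mem_Ioi_prod_Ioi.mono fun p hp =>
          schurSum_volterraKernel_nonneg hx.le hα (even_two_mul m) hp β₁ β₂ β₃
    _ = _ := integral_schurSum (integrable_volterraKernel hx hα hβ₁ _)
          (integrable_volterraKernel hx hα hβ₂ _) (integrable_volterraKernel hx hα hβ₃ _)

/-- Schur type inequality for `Δ_n(β) = I_{n-1}(β) I_{n+1}(β) − I_n(β)²`, odd `n ≥ 1`. -/
theorem volterraI_delta_schur (x α : ℝ) (hx : 0 < x) (hα : -1 < α)
    (n : ℕ) (hn1 : 1 ≤ n) (hn : Odd n)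
    (β₁ β₂ β₃ : ℝ) (hβ₁ : -1 < β₁) (hβ₂ : -1 < β₂) (hβ₃ : -1 < β₃) :
    0 ≤ (β₁ - β₂) * (β₁ - β₃) *
          (volterraI x α (n - 1) β₁ * volterraI x α (n + 1) β₁ -
            volterraI x α n β₁ ^ 2) +
        (β₂ - β₁) * (β₂ - β₃) *
          (volterraI x α (n - 1) β₂ * volterraI x α (n + 1) β₂ -
            volterraI x α n β₂ ^ 2) +
        (β₃ - β₁) * (β₃ - β₂) *
          (volterraI x α (n - 1) β₃ * volterraI x α (n + 1) β₃ -
            volterraI x α n β₃ ^ 2) :=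
  volterraI_delta_schur_general x α hx hα n hn β₁ β₂ β₃ hβ₁ hβ₂ hβ₃
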